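/- (Corollary for prox-functions of quadratic growth.) Let the prox-function d additionally satisfy d(x) ≤ C(d)‖x‖² on the unit ball. Let f be uniformly convex on Q with parameters ρ ≥ 2 and μ(f) > 0, with subgradients bounded by L > 0 in dual norm, let x̄ ∈ Q, 0 < r ≤ R, let x* be a minimizer of f over Q_R(x̄), and assume ‖x̄ − x*‖ ≤ r. Run dual averaging over Q_R(x̄) with λ_i = 1 and β_i = γ√(N+1), where γ = R² L/(r √(2 C(d) μ(d))), with output x_N(x̄,R) = (1/(N+1)) Σ_{i=0}^{N} x_i. Then f(x_N(x̄,R)) − f(x*) ≤ r L √(2 C(d)/(μ(d)(N+1))) and ‖x_N(x̄,R) − x*‖^ρ ≤ (r L/μ(f)) √(2 C(d)/(μ(d)(N+1))). -/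

import Mathlib

/-!
At step `k`, dual averaging with constant gain `B` minimizes the `Bσ`-strongly convex function
`B • D + ∑_{i<k} gᵢ` over `Q_R(x̄)`, so consecutive values of the minimum grow by at least
`gₖ(xₖ) − L²/(2Bσ)`; comparing the last minimum with its value at `x*` bounds the regret
`∑ gᵢ(xᵢ − x*)` by `B · D(x*) + (N+1) L²/(2Bσ)`, and the gain `γ√(N+1)` balances the two terms.
Uniform convexity strengthens the subgradient inequalities by `(μ(f)/2)‖xᵢ − x*‖^ρ`, so by Jensen
the regret over `N + 1` bounds `f(x_N) − f(x*) + (μ(f)/2)‖x_N − x*‖^ρ`, while optimality of `x*`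
gives `f(x_N) − f(x*) ≥ (μ(f)/2)‖x_N − x*‖^ρ`.
-/

open Real Set Filter Topology

section UniformConvexity

variable {E : Type*} [NormedAddCommGroup E] [NormedSpace ℝ E]

/-- Uniform convexity with the modulus of the paper. Mathlib's `UniformConvexOn` has a modulus of
the form `α (1 - α) φ ‖x - y‖`, which cannot express the factor `α ^ (ρ - 1) + (1 - α) ^ (ρ - 1)`
that tends to `1` at the end points. -/
def UniformlyConvexOn (s : Set E) (ρ μ : ℝ) (f : E → ℝ) : Prop :=
  ∀ x ∈ s, ∀ y ∈ s, ∀ α ∈ Icc (0 : ℝ) 1,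
    f (α • x + (1 - α) • y) ≤ α * f x + (1 - α) * f y -
      (μ / 2) * α * (1 - α) * (α ^ (ρ - 1) + (1 - α) ^ (ρ - 1)) * ‖x - y‖ ^ ρ

variable {s t : Set E} {ρ μ : ℝ} {f : E → ℝ}

theorem uniformlyConvexOn_two_iff :
    UniformlyConvexOn s 2 μ f ↔ ∀ x ∈ s, ∀ y ∈ s, ∀ α ∈ Icc (0 : ℝ) 1,
      f (α • x + (1 - α) • y) ≤ α * f x + (1 - α) * f y - (μ / 2) * α * (1 - α) * ‖x - y‖ ^ 2 := by
  norm_num [UniformlyConvexOn]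

theorem UniformlyConvexOn.mono (hf : UniformlyConvexOn s ρ μ f) (hts : t ⊆ s) :
    UniformlyConvexOn t ρ μ f :=
  fun x hx y hy => hf x (hts hx) y (hts hy)

theorem UniformlyConvexOn.const_mul (hf : UniformlyConvexOn s ρ μ f) {c : ℝ} (hc : 0 ≤ c) :
    UniformlyConvexOn s ρ (c * μ) (fun x => c * f x) := by
  intro x hx y hy α hα
  have := mul_le_mul_of_nonneg_left (hf x hx y hy α hα) hc
  linarith

theorem UniformlyConvexOn.add_clm (hf : UniformlyConvexOn s ρ μ f) (ℓ : E →L[ℝ] ℝ) :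
    UniformlyConvexOn s ρ μ (fun x => f x + ℓ x) := by
  intro x hx y hy α hα
  have := hf x hx y hy α hα
  simp only [map_add, map_smul, smul_eq_mul]
  linarith

theorem UniformlyConvexOn.comp_smul_sub (hf : UniformlyConvexOn s ρ μ f) (c : ℝ) (a : E) :
    UniformlyConvexOn ((fun x => c • (x - a)) ⁻¹' s) ρ (μ * |c| ^ ρ)
      (fun x => f (c • (x - a))) := by
  intro x hx y hy α hα
  have h := hf _ hx _ hy α hα
  have hcomb : α • (c • (x - a)) + (1 - α) • (c • (y - a)) = c • (α • x + (1 - α) • y - a) := by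
    module
  have hdiff : ‖c • (x - a) - c • (y - a)‖ ^ ρ = |c| ^ ρ * ‖x - y‖ ^ ρ := by
    rw [← smul_sub, sub_sub_sub_cancel_right, norm_smul, Real.norm_eq_abs,
      mul_rpow (abs_nonneg c) (norm_nonneg _)]
  rw [hcomb, hdiff] at h
  linarith

theorem UniformlyConvexOn.convexOn (hf : UniformlyConvexOn s ρ μ f) (hs : Convex ℝ s)
    (hμ : 0 ≤ μ) : ConvexOn ℝ s f := by
  refine ⟨hs, fun x hx y hy a b ha hb hab => ?_⟩
  obtain rfl : b = 1 - a := by linarith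
  have hmod : 0 ≤ (μ / 2) * a * (1 - a) * (a ^ (ρ - 1) + (1 - a) ^ (ρ - 1)) * ‖x - y‖ ^ ρ := by
    have := rpow_nonneg hb (ρ - 1)
    positivity
  have := hf x hx y hy a ⟨ha, by linarith⟩
  simp only [smul_eq_mul]
  linarith

theorem UniformlyConvexOn.add_norm_rpow_le_of_isMinOn (hf : UniformlyConvexOn s ρ μ f)
    (hs : Convex ℝ s) (hρ : 1 < ρ) {x z : E} (hx : x ∈ s) (hz : z ∈ s) (hmin : IsMinOn f s z) :
    f z + μ / 2 * ‖x - z‖ ^ ρ ≤ f x := by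
  set w : ℝ → ℝ := fun α => (1 - α) * (α ^ (ρ - 1) + (1 - α) ^ (ρ - 1))
  have hw : Tendsto w (𝓝[>] 0) (𝓝 1) := by
    have hcont : ContinuousAt w 0 := by
      apply ContinuousAt.mul (by fun_prop)
      exact ((continuousAt_id.rpow_const (Or.inr (by linarith))).add
        ((continuousAt_const.sub continuousAt_id).rpow_const (Or.inr (by linarith))))
    have h0 : w 0 = 1 := by simp [w, zero_rpow (by linarith : ρ - 1 ≠ 0)]
    exact h0 ▸ hcont.tendsto.mono_left nhdsWithin_le_nhds
  -- minimality of `z` against `α • x + (1 - α) • z`, divided by `α`; then let `α → 0⁺`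
  have hseg : ∀ α ∈ Ioc (0 : ℝ) 1, f z + μ / 2 * ‖x - z‖ ^ ρ * w α ≤ f x := by
    rintro α ⟨hα0, hα1⟩
    have hmem : α • x + (1 - α) • z ∈ s := hs hx hz hα0.le (by linarith) (by ring)
    have h := (hf x hx z hz α ⟨hα0.le, hα1⟩).trans' (hmin hmem)
    have : α * (f z + μ / 2 * ‖x - z‖ ^ ρ * w α - f x) ≤ 0 := by
      simp only [w]; linarith
    exact sub_nonpos.1 (nonpos_of_mul_nonpos_right this hα0)
  have hlim : Tendsto (fun α => f z + μ / 2 * ‖x - z‖ ^ ρ * w α) (𝓝[>] 0)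
      (𝓝 (f z + μ / 2 * ‖x - z‖ ^ ρ * 1)) :=
    tendsto_const_nhds.add (tendsto_const_nhds.mul hw)
  rw [mul_one] at hlim
  exact le_of_tendsto hlim (eventually_of_mem (Ioc_mem_nhdsGT one_pos) hseg)

theorem UniformlyConvexOn.add_norm_rpow_le_of_subgradient (hf : UniformlyConvexOn s ρ μ f)
    (hs : Convex ℝ s) (hρ : 1 < ρ) {x y : E} (hx : x ∈ s) (hy : y ∈ s) {g : E →L[ℝ] ℝ}
    (hg : ∀ z ∈ s, f x + g (z - x) ≤ f z) :
    f x + g (y - x) + μ / 2 * ‖y - x‖ ^ ρ ≤ f y := by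
  have hmin : IsMinOn (fun z => f z + (-g) z) s x := fun z hz => by
    have := hg z hz
    simp only [mem_ofPred_eq, neg_apply, map_sub] at this ⊢
    linarith
  have := (hf.add_clm (-g)).add_norm_rpow_le_of_isMinOn hs hρ hy hx hmin
  simp only [neg_apply, map_sub] at this ⊢
  linarith

theorem UniformlyConvexOn.sum_sub_add_norm_rpow_le {ι : Type*} (hf : UniformlyConvexOn s ρ μ f)
    (hs : Convex ℝ s) (hρ : 1 < ρ) {t : Finset ι} {x : ι → E} {g : ι → E →L[ℝ] ℝ}
    (hx : ∀ i ∈ t, x i ∈ s) (hg : ∀ i ∈ t, ∀ y ∈ s, f (x i) + g i (y - x i) ≤ f y) {z : E}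
    (hz : z ∈ s) :
    ∑ i ∈ t, (f (x i) - f z + μ / 2 * ‖x i - z‖ ^ ρ) ≤ ∑ i ∈ t, g i (x i - z) :=
  Finset.sum_le_sum fun i hi => by
    have := hf.add_norm_rpow_le_of_subgradient hs hρ (hx i hi) hz (hg i hi)
    rw [← neg_sub, map_neg, norm_neg] at this
    linarith

theorem convexOn_norm_sub_rpow (hρ : 1 ≤ ρ) (a : E) : ConvexOn ℝ univ fun x => ‖x - a‖ ^ ρ := by
  refine ⟨convex_univ, fun x _ y _ α β hα hβ hαβ => ?_⟩
  have hsplit : α • x + β • y - a = α • (x - a) + β • (y - a) := by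
    linear_combination (norm := module) hαβ • a
  calc ‖α • x + β • y - a‖ ^ ρ ≤ (α * ‖x - a‖ + β * ‖y - a‖) ^ ρ := by
        rw [hsplit]
        exact rpow_le_rpow (norm_nonneg _) ((convexOn_univ_norm.2 trivial trivial hα hβ hαβ).trans
          (by simp only [smul_eq_mul, le_refl])) (by linarith)
    _ ≤ α • ‖x - a‖ ^ ρ + β • ‖y - a‖ ^ ρ :=
        (convexOn_rpow hρ).2 (norm_nonneg _) (norm_nonneg _) hα hβ hαβ

theorem UniformlyConvexOn.average_bound {ι : Type*} (hf : UniformlyConvexOn s ρ μ f)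
    (hs : Convex ℝ s) (hρ : 1 < ρ) (hμ : 0 ≤ μ) {z : E} (hz : z ∈ s) (hmin : IsMinOn f s z)
    {t : Finset ι} (ht : t.Nonempty) {x : ι → E} (hx : ∀ i ∈ t, x i ∈ s) {δ : ℝ}
    (hgap : ∑ i ∈ t, (f (x i) - f z + μ / 2 * ‖x i - z‖ ^ ρ) ≤ t.card * δ) :
    f ((1 / (t.card : ℝ)) • ∑ i ∈ t, x i) - f z ≤ δ ∧
      μ * ‖(1 / (t.card : ℝ)) • ∑ i ∈ t, x i - z‖ ^ ρ ≤ δ := by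
  have hcard : (0 : ℝ) < t.card := by simpa using ht
  have hF : ConvexOn ℝ s fun y => f y - f z + μ / 2 * ‖y - z‖ ^ ρ :=
    ((hf.convexOn hs hμ).add_const (-f z)).add
      (((convexOn_norm_sub_rpow hρ.le z).subset (subset_univ s) hs).smul (by positivity))
  have hw : ∑ _i ∈ t, 1 / (t.card : ℝ) = 1 := by
    rw [Finset.sum_const, nsmul_eq_mul, mul_one_div_cancel hcard.ne']
  have hjensen := hF.map_sum_le (fun _ _ => by positivity) hw hx
  simp only [smul_eq_mul, ← Finset.mul_sum, ← Finset.smul_sum] at hjensen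
  have hmean : 1 / (t.card : ℝ) * ∑ i ∈ t, (f (x i) - f z + μ / 2 * ‖x i - z‖ ^ ρ) ≤ δ := by
    rw [one_div_mul_eq_div, div_le_iff₀ hcard]; linarith
  have hxa : (1 / (t.card : ℝ)) • ∑ i ∈ t, x i ∈ s := by
    rw [Finset.smul_sum]
    exact hs.sum_mem (fun _ _ => by positivity) hw hx
  have hgrowth := hf.add_norm_rpow_le_of_isMinOn hs hρ hxa hz hmin
  have hnorm : 0 ≤ μ / 2 * ‖(1 / (t.card : ℝ)) • ∑ i ∈ t, x i - z‖ ^ ρ := by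
    have := rpow_nonneg (norm_nonneg ((1 / (t.card : ℝ)) • ∑ i ∈ t, x i - z)) ρ
    positivity
  constructor <;> linarith

theorem half_le_of_le_mul_norm_sq [Nontrivial E] {d : E → ℝ} {μ C : ℝ}
    (hd : UniformlyConvexOn (Metric.closedBall 0 1) 2 μ d) (hd0 : d 0 = 0)
    (hd_nonneg : ∀ x ∈ Metric.closedBall (0 : E) 1, 0 ≤ d x)
    (hdC : ∀ x ∈ Metric.closedBall (0 : E) 1, d x ≤ C * ‖x‖ ^ 2) : μ / 2 ≤ C := by
  obtain ⟨u, hu⟩ := exists_norm_eq E zero_le_one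
  have hu1 : u ∈ Metric.closedBall (0 : E) 1 := by simp [hu]
  have hmin : IsMinOn d (Metric.closedBall 0 1) 0 := fun y hy => by
    simpa [hd0] using hd_nonneg y hy
  have hgrowth := hd.add_norm_rpow_le_of_isMinOn (convex_closedBall 0 1) one_lt_two hu1
    (Metric.mem_closedBall_self zero_le_one) hmin
  have hbound := hdC u hu1
  rw [hd0, sub_zero, hu, one_rpow] at hgrowth
  rw [hu, one_pow] at hbound
  linarith

end UniformConvexity

section DualAveraging

open Finset

variable {E : Type*} [NormedAddCommGroup E] [NormedSpace ℝ E] {K : Set E} {D : E → ℝ}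
  {σ B L : ℝ} {x : ℕ → E} {g : ℕ → E →L[ℝ] ℝ}

theorem dualAveraging_value_step (hK : Convex ℝ K) (hD : UniformlyConvexOn K 2 σ D) (hB : 0 < B)
    (hσ : 0 < σ) {k : ℕ} (hxk : x k ∈ K) (hxk' : x (k + 1) ∈ K) (hg : ‖g k‖ ≤ L)
    (hmin : IsMinOn (fun y => B * D y + (∑ i ∈ range k, g i) y) K (x k)) :
    B * D (x k) + (∑ i ∈ range k, g i) (x k) + g k (x k) - L ^ 2 / (2 * (B * σ)) ≤
      B * D (x (k + 1)) + (∑ i ∈ range (k + 1), g i) (x (k + 1)) := by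
  set t := ‖x (k + 1) - x k‖
  have hgrowth := ((hD.const_mul hB.le).add_clm (∑ i ∈ range k, g i)).add_norm_rpow_le_of_isMinOn
    hK one_lt_two hxk' hxk hmin
  rw [rpow_two] at hgrowth
  have hlin : -(L * t) ≤ g k (x (k + 1) - x k) :=
    neg_le_of_abs_le ((g k).le_of_opNorm_le hg _)
  have hquad : L * t - B * σ / 2 * t ^ 2 ≤ L ^ 2 / (2 * (B * σ)) := by
    rw [le_div_iff₀ (by positivity)]
    nlinarith [sq_nonneg (L - B * σ * t)]
  rw [map_sub] at hlin
  rw [sum_range_succ, _root_.add_apply]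
  linarith

theorem dualAveraging_value_ge (hK : Convex ℝ K) (hD : UniformlyConvexOn K 2 σ D) (hB : 0 < B)
    (hσ : 0 < σ) (hx : ∀ k, x k ∈ K) (hg : ∀ k, ‖g k‖ ≤ L)
    (hmin : ∀ k, IsMinOn (fun y => B * D y + (∑ i ∈ range k, g i) y) K (x k)) (n : ℕ) :
    B * D (x 0) + ∑ i ∈ range n, g i (x i) - n * (L ^ 2 / (2 * (B * σ))) ≤
      B * D (x n) + (∑ i ∈ range n, g i) (x n) := by
  induction n with
  | zero => simp
  | succ k ih =>
    have hstep := dualAveraging_value_step hK hD hB hσ (hx k) (hx (k + 1)) (hg k) (hmin k)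
    rw [sum_range_succ (fun i => g i (x i)), Nat.cast_succ]
    linarith

theorem dualAveraging_regret_le (hK : Convex ℝ K) (hD : UniformlyConvexOn K 2 σ D) (hB : 0 < B)
    (hσ : 0 < σ) (hx : ∀ k, x k ∈ K) (hg : ∀ k, ‖g k‖ ≤ L)
    (hmin : ∀ k, IsMinOn (fun y => B * D y + (∑ i ∈ range k, g i) y) K (x k)) (n : ℕ) {y : E}
    (hy : y ∈ K) :
    ∑ i ∈ range n, g i (x i - y) ≤ B * (D y - D (x 0)) + n * (L ^ 2 / (2 * (B * σ))) := by
  have hvalue := dualAveraging_value_ge hK hD hB hσ hx hg hmin n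
  have hy := hmin n hy
  simp only [mem_ofPred_eq, _root_.sum_apply] at hy hvalue
  simp only [map_sub, sum_sub_distrib]
  linarith

theorem dualAveraging_isMinOn {a : E} {s : ℕ → E →L[ℝ] ℝ} (hB : 0 ≤ B) (hx0 : x 0 = a)
    (hD : IsMinOn D K a) (hs0 : s 0 = 0) (hs : ∀ i, s (i + 1) = s i + g i)
    (hmax : ∀ i, ∀ y ∈ K, (-(s (i + 1))) (y - a) - B * D y ≤
      (-(s (i + 1))) (x (i + 1) - a) - B * D (x (i + 1))) (k : ℕ) :
    IsMinOn (fun y => B * D y + (∑ i ∈ range k, g i) y) K (x k) := by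
  have hsum : ∀ k, s k = ∑ i ∈ range k, g i := by
    intro k
    induction k with
    | zero => simpa using hs0
    | succ k ih => rw [hs k, ih, sum_range_succ]
  intro y hy
  cases k with
  | zero =>
    have := mul_le_mul_of_nonneg_left (hD hy) hB
    simpa [hx0] using this
  | succ k =>
    have := hmax k y hy
    simp only [neg_apply, map_sub, hsum] at this
    simp only [mem_ofPred_eq]
    linarith

end DualAveraging

section Scaling

variable {E : Type*} [NormedAddCommGroup E] [NormedSpace ℝ E] {R : ℝ}

theorem norm_one_div_smul_sub (hR : 0 < R) (y a : E) : ‖(1 / R) • (y - a)‖ = dist y a / R := by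
  rw [norm_smul, norm_div, norm_one, Real.norm_of_nonneg hR.le, dist_eq_norm, one_div_mul_eq_div]

theorem one_div_smul_sub_mem_closedBall (hR : 0 < R) {y a : E} (hy : y ∈ Metric.closedBall a R) :
    (1 / R) • (y - a) ∈ Metric.closedBall (0 : E) 1 := by
  rw [mem_closedBall_zero_iff, norm_one_div_smul_sub hR, div_le_one hR]
  exact hy

theorem UniformlyConvexOn.comp_one_div_smul_sub {d : E → ℝ} {μ : ℝ}
    (hd : UniformlyConvexOn (Metric.closedBall 0 1) 2 μ d) (hR : 0 < R) (a : E) :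
    UniformlyConvexOn (Metric.closedBall a R) 2 (μ / R ^ 2) fun y => d ((1 / R) • (y - a)) := by
  have h := (hd.comp_smul_sub (1 / R) a).mono fun y hy => one_div_smul_sub_mem_closedBall hR hy
  rwa [rpow_two, sq_abs, div_pow, one_pow, ← div_eq_mul_one_div] at h

theorem isMinOn_comp_one_div_smul_sub {d : E → ℝ} (hR : 0 < R) (hd0 : d 0 = 0)
    (hd_nonneg : ∀ x ∈ Metric.closedBall (0 : E) 1, 0 ≤ d x) (a : E) :
    IsMinOn (fun y => d ((1 / R) • (y - a))) (Metric.closedBall a R) a := fun y hy => by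
  simpa [hd0] using hd_nonneg _ (one_div_smul_sub_mem_closedBall hR hy)

theorem comp_one_div_smul_sub_le_of_le_mul_norm_sq {d : E → ℝ} {C r : ℝ} (hR : 0 < R)
    (hC : 0 ≤ C) (hdC : ∀ x ∈ Metric.closedBall (0 : E) 1, d x ≤ C * ‖x‖ ^ 2) {y a : E}
    (hy : dist y a ≤ r) (hrR : r ≤ R) : d ((1 / R) • (y - a)) ≤ C * (r / R) ^ 2 := by
  refine (hdC _ (one_div_smul_sub_mem_closedBall hR (hy.trans hrR))).trans ?_
  rw [norm_one_div_smul_sub hR]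
  gcongr

end Scaling

/-- The gain `R² L √n / (r √(2 C μd))` minimizes the left-hand side over all gains `B > 0`. -/
theorem regret_bound_at_optimal_gain {C μd L r R n : ℝ} (hC : 0 < C) (hμd : 0 < μd) (hL : 0 < L)
    (hr : 0 < r) (hR : 0 < R) (hn : 0 < n) :
    R ^ 2 * L / (r * √(2 * C * μd)) * √n * (C * (r / R) ^ 2) +
        n * (L ^ 2 / (2 * (R ^ 2 * L / (r * √(2 * C * μd)) * √n * (μd / R ^ 2)))) =
      n * (r * L * √(2 * C / (μd * n))) := by
  have ht : √(2 * C * μd) ^ 2 = 2 * C * μd := sq_sqrt (by positivity)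
  have hs : √n ^ 2 = n := sq_sqrt hn.le
  have hsplit : √(2 * C / (μd * n)) = √(2 * C * μd) / (μd * √n) := by
    rw [show 2 * C / (μd * n) = (√(2 * C * μd) / (μd * √n)) ^ 2 by
      rw [div_pow, mul_pow, ht, hs]; field_simp]
    exact sqrt_sq (by positivity)
  have : 0 < √(2 * C * μd) := by positivity
  have : 0 < √n := by positivity
  rw [hsplit]
  field_simp
  rw [ht, hs]
  ring

open Finset in
theorem dual_averaging_quadratic_growth_general
    {E : Type*} [NormedAddCommGroup E] [NormedSpace ℝ E]
    (Q : Set E) (hQconv : Convex ℝ Q)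
    (d : E → ℝ) (μd C : ℝ) (hμd : 0 < μd)
    (hd_sc : ∀ x ∈ Metric.closedBall (0 : E) 1, ∀ y ∈ Metric.closedBall (0 : E) 1,
      ∀ α ∈ Set.Icc (0 : ℝ) 1,
      d (α • x + (1 - α) • y) ≤
        α * d x + (1 - α) * d y - (μd / 2) * α * (1 - α) * ‖x - y‖ ^ 2)
    (hd0 : d 0 = 0)
    (hd_nonneg : ∀ x ∈ Metric.closedBall (0 : E) 1, 0 ≤ d x)
    (hdC : ∀ x ∈ Metric.closedBall (0 : E) 1, d x ≤ C * ‖x‖ ^ 2)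
    (f : E → ℝ) (ρ μf : ℝ) (hρ : 2 ≤ ρ) (hμf : 0 < μf)
    (huc : ∀ x ∈ Q, ∀ y ∈ Q, ∀ α ∈ Set.Icc (0 : ℝ) 1,
      f (α • x + (1 - α) • y) ≤
        α * f x + (1 - α) * f y -
          (μf / 2) * α * (1 - α) * (α ^ (ρ - 1) + (1 - α) ^ (ρ - 1)) * ‖x - y‖ ^ ρ)
    (L : ℝ) (hLpos : 0 < L)
    (hL : ∀ x ∈ Q, ∀ g : E →L[ℝ] ℝ, (∀ y ∈ Q, f x + g (y - x) ≤ f y) → ‖g‖ ≤ L)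
    (xbar : E) (hxbar : xbar ∈ Q) (r R : ℝ) (hr : 0 < r) (hrR : r ≤ R)
    (xstar : E) (hxstarQ : xstar ∈ Q ∩ Metric.closedBall xbar R)
    (hxstar : ∀ y ∈ Q ∩ Metric.closedBall xbar R, f xstar ≤ f y)
    (hclose : ‖xbar - xstar‖ ≤ r)
    (N : ℕ) (γ : ℝ) (hγ : γ = R ^ 2 * L / (r * Real.sqrt (2 * C * μd)))
    (β : ℕ → ℝ) (hβ : ∀ i, β i = γ * Real.sqrt ((N : ℝ) + 1))
    (xs : ℕ → E) (g : ℕ → E →L[ℝ] ℝ) (s : ℕ → E →L[ℝ] ℝ)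
    (hx0 : xs 0 = xbar) (hs0 : s 0 = 0)
    (hsub : ∀ i, ∀ y ∈ Q, f (xs i) + (g i) (y - xs i) ≤ f y)
    (hsrec : ∀ i, s (i + 1) = s i + g i)
    (hxrec : ∀ i, xs (i + 1) ∈ Q ∩ Metric.closedBall xbar R ∧
      ∀ y ∈ Q ∩ Metric.closedBall xbar R,
        (-(s (i + 1))) (y - xbar) - β (i + 1) * d ((1 / R) • (y - xbar)) ≤
          (-(s (i + 1))) (xs (i + 1) - xbar)
            - β (i + 1) * d ((1 / R) • (xs (i + 1) - xbar)))
    (xN : E) (hxN : xN = (1 / ((N : ℝ) + 1)) • ∑ i ∈ Finset.range (N + 1), xs i) :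
    f xN - f xstar ≤ r * L * Real.sqrt (2 * C / (μd * ((N : ℝ) + 1))) ∧
    ‖xN - xstar‖ ^ ρ ≤ (r * L / μf) * Real.sqrt (2 * C / (μd * ((N : ℝ) + 1))) := by
  rcases subsingleton_or_nontrivial E with hE | hE
  · rw [Subsingleton.elim xN xstar, sub_self, sub_self, norm_zero, zero_rpow (by linarith)]
    constructor <;> positivity
  have hd := uniformlyConvexOn_two_iff.2 hd_sc
  have hf : UniformlyConvexOn Q ρ μf f := huc
  -- on a nontrivial space the prox-function forces `μd / 2 ≤ C`, so the gain is positive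
  have hC : 0 < C := (half_pos hμd).trans_le (half_le_of_le_mul_norm_sq hd hd0 hd_nonneg hdC)
  have hR : 0 < R := hr.trans_le hrR
  have hK : Convex ℝ (Q ∩ Metric.closedBall xbar R) := hQconv.inter (convex_closedBall xbar R)
  have hxK : ∀ k, xs k ∈ Q ∩ Metric.closedBall xbar R
    | 0 => by rw [hx0]; exact ⟨hxbar, Metric.mem_closedBall_self hR.le⟩
    | k + 1 => (hxrec k).1
  have hD := (hd.comp_one_div_smul_sub hR xbar).mono (inter_subset_right (s := Q))
  have hDmin := (isMinOn_comp_one_div_smul_sub hR hd0 hd_nonneg xbar).on_subset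
    (inter_subset_right (s := Q))
  have hB : 0 < γ * √((N : ℝ) + 1) := by rw [hγ]; positivity
  have hmin := dualAveraging_isMinOn hB.le hx0 hDmin hs0 hsrec fun i => hβ (i + 1) ▸ (hxrec i).2
  have hregret := dualAveraging_regret_le hK hD hB (by positivity) hxK
    (fun k => hL _ (hxK k).1 _ (hsub k)) hmin (N + 1) hxstarQ
  have hDstar := comp_one_div_smul_sub_le_of_le_mul_norm_sq hR hC.le hdC
    (by rwa [dist_comm, dist_eq_norm]) hrR
  have hgap : ∑ i ∈ range (N + 1), (f (xs i) - f xstar + μf / 2 * ‖xs i - xstar‖ ^ ρ) ≤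
      ((N : ℝ) + 1) * (r * L * √(2 * C / (μd * ((N : ℝ) + 1)))) := by
    calc _ ≤ ∑ i ∈ range (N + 1), g i (xs i - xstar) :=
          hf.sum_sub_add_norm_rpow_le hQconv (by linarith) (fun i _ => (hxK i).1)
            (fun i _ => hsub i) hxstarQ.1
      _ ≤ γ * √((N : ℝ) + 1) * (C * (r / R) ^ 2) +
            ((N : ℝ) + 1) * (L ^ 2 / (2 * (γ * √((N : ℝ) + 1) * (μd / R ^ 2)))) := by
          rw [hx0, sub_self, smul_zero, hd0, sub_zero, Nat.cast_succ] at hregret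
          linarith [mul_le_mul_of_nonneg_left hDstar hB.le]
      _ = _ := by
          rw [hγ]
          exact regret_bound_at_optimal_gain hC hμd hLpos hr hR (by positivity)
  have := (hf.mono inter_subset_left).average_bound hK (by linarith) hμf.le hxstarQ hxstar
    nonempty_range_add_one (fun i _ => hxK i) (by rwa [card_range, Nat.cast_succ])
  rw [card_range, Nat.cast_succ, ← hxN] at this
  exact ⟨this.1, by rw [div_mul_eq_mul_div, le_div_iff₀ hμf]; linarith [this.2]⟩

/-- Corollary 3.2 for prox-functions of quadratic growth.
The prox-function additionally satisfies `d x ≤ C ‖x‖²` on the unit ball, the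
starting point satisfies `‖x̄ − x*‖ ≤ r ≤ R`, and the gain is
`γ = R² L /(r √(2 C μ(d)))`. -/
theorem dual_averaging_quadratic_growth
    {E : Type*} [NormedAddCommGroup E] [NormedSpace ℝ E] [FiniteDimensional ℝ E]
    (Q : Set E) (hQc : IsClosed Q) (hQconv : Convex ℝ Q)
    (d : E → ℝ) (μd C : ℝ) (hμd : 0 < μd)
    (hd_cont : ContinuousOn d (Metric.closedBall (0 : E) 1))
    (hd_sc : ∀ x ∈ Metric.closedBall (0 : E) 1, ∀ y ∈ Metric.closedBall (0 : E) 1,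
      ∀ α ∈ Set.Icc (0 : ℝ) 1,
      d (α • x + (1 - α) • y) ≤
        α * d x + (1 - α) * d y - (μd / 2) * α * (1 - α) * ‖x - y‖ ^ 2)
    (hd0 : d 0 = 0)
    (hd_nonneg : ∀ x ∈ Metric.closedBall (0 : E) 1, 0 ≤ d x)
    (hdC : ∀ x ∈ Metric.closedBall (0 : E) 1, d x ≤ C * ‖x‖ ^ 2)
    (f : E → ℝ) (ρ μf : ℝ) (hρ : 2 ≤ ρ) (hμf : 0 < μf)
    (huc : ∀ x ∈ Q, ∀ y ∈ Q, ∀ α ∈ Set.Icc (0 : ℝ) 1,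
      f (α • x + (1 - α) • y) ≤
        α * f x + (1 - α) * f y -
          (μf / 2) * α * (1 - α) * (α ^ (ρ - 1) + (1 - α) ^ (ρ - 1)) * ‖x - y‖ ^ ρ)
    (L : ℝ) (hLpos : 0 < L)
    (hL : ∀ x ∈ Q, ∀ g : E →L[ℝ] ℝ, (∀ y ∈ Q, f x + g (y - x) ≤ f y) → ‖g‖ ≤ L)
    (xbar : E) (hxbar : xbar ∈ Q) (r R : ℝ) (hr : 0 < r) (hrR : r ≤ R)
    (xstar : E) (hxstarQ : xstar ∈ Q ∩ Metric.closedBall xbar R)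
    (hxstar : ∀ y ∈ Q ∩ Metric.closedBall xbar R, f xstar ≤ f y)
    (hclose : ‖xbar - xstar‖ ≤ r)
    (N : ℕ) (γ : ℝ) (hγ : γ = R ^ 2 * L / (r * Real.sqrt (2 * C * μd)))
    (β : ℕ → ℝ) (hβ : ∀ i, β i = γ * Real.sqrt ((N : ℝ) + 1))
    (xs : ℕ → E) (g : ℕ → E →L[ℝ] ℝ) (s : ℕ → E →L[ℝ] ℝ)
    (hx0 : xs 0 = xbar) (hs0 : s 0 = 0)
    (hsub : ∀ i, ∀ y ∈ Q, f (xs i) + (g i) (y - xs i) ≤ f y)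
    (hsrec : ∀ i, s (i + 1) = s i + g i)
    (hxrec : ∀ i, xs (i + 1) ∈ Q ∩ Metric.closedBall xbar R ∧
      ∀ y ∈ Q ∩ Metric.closedBall xbar R,
        (-(s (i + 1))) (y - xbar) - β (i + 1) * d ((1 / R) • (y - xbar)) ≤
          (-(s (i + 1))) (xs (i + 1) - xbar)
            - β (i + 1) * d ((1 / R) • (xs (i + 1) - xbar)))
    (xN : E) (hxN : xN = (1 / ((N : ℝ) + 1)) • ∑ i ∈ Finset.range (N + 1), xs i) :
    f xN - f xstar ≤ r * L * Real.sqrt (2 * C / (μd * ((N : ℝ) + 1))) ∧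
    ‖xN - xstar‖ ^ ρ ≤ (r * L / μf) * Real.sqrt (2 * C / (μd * ((N : ℝ) + 1))) :=
  dual_averaging_quadratic_growth_general Q hQconv d μd C hμd hd_sc hd0 hd_nonneg hdC f ρ μf hρ hμf
    huc L hLpos hL xbar hxbar r R hr hrR xstar hxstarQ hxstar hclose N γ hγ β hβ xs g s hx0 hs0 hsub
    hsrec hxrec xN hxN
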